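/- Let n ≥ 1, let d, α ∈ ℂ, and let A_red = (a_{ij}) be an n×n complex matrix. Let A be the (n+1)×(n+1) complex matrix defined by: A_{1,1} = d+α, A_{1,2} = 1, A_{1,j} = 0 for 3 ≤ j ≤ n+1; A_{2,1} = a_{11}+α², A_{2,2} = d+α, A_{2,j+1} = a_{1j} for 2 ≤ j ≤ n; and for 2 ≤ i ≤ n: A_{i+1,1} = a_{i1}, A_{i+1,2} = 0, and A_{i+1,j+1} = a_{ij} + d·δ_{ij} for 2 ≤ j ≤ n. Then rank(A − d·I) = 1 + rank(A_red). In particular, d is an eigenvalue of A of geometric multiplicity at least n−1 if and only if rank(A_red) ≤ 1. -/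
import Mathlib


open Matrix

/-- For the element A of the Jacobson–Morozov slice in 𝔰𝔩(n+1,ℂ) determined
(in 1-based notation) by the data d, α and the reduced n×n matrix
A_red = (a_{ij}), one has rank(A − d·I) = 1 + rank(A_red); in particular d is
an eigenvalue of A of geometric multiplicity at least n−1 iff rank(A_red) ≤ 1. -/
theorem slice_rank_eq_one_add_reduced_rank (n : ℕ) (hn : 1 ≤ n) (d α : ℂ)
    (a : Matrix (Fin n) (Fin n) ℂ)
    (A : Matrix (Fin (n + 1)) (Fin (n + 1)) ℂ)
    (h00 : A ⟨0, by omega⟩ ⟨0, by omega⟩ = d + α)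
    (h01 : A ⟨0, by omega⟩ ⟨1, by omega⟩ = 1)
    (h0j : ∀ j : Fin (n + 1), 2 ≤ (j : ℕ) → A ⟨0, by omega⟩ j = 0)
    (h10 : A ⟨1, by omega⟩ ⟨0, by omega⟩ = a ⟨0, by omega⟩ ⟨0, by omega⟩ + α ^ 2)
    (h11 : A ⟨1, by omega⟩ ⟨1, by omega⟩ = d + α)
    (h1j : ∀ j : Fin n, 1 ≤ (j : ℕ) → A ⟨1, by omega⟩ j.succ = a ⟨0, by omega⟩ j)
    (hi0 : ∀ i : Fin n, 1 ≤ (i : ℕ) → A i.succ ⟨0, by omega⟩ = a i ⟨0, by omega⟩)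
    (hi1 : ∀ i : Fin n, 1 ≤ (i : ℕ) → A i.succ ⟨1, by omega⟩ = 0)
    (hij : ∀ i j : Fin n, 1 ≤ (i : ℕ) → 1 ≤ (j : ℕ) →
      A i.succ j.succ = a i j + (if i = j then d else 0)) :
    (A - d • (1 : Matrix (Fin (n + 1)) (Fin (n + 1)) ℂ)).rank = 1 + a.rank ∧
      (n - 1 ≤ Module.finrank ℂ (LinearMap.ker
          (A - d • (1 : Matrix (Fin (n + 1)) (Fin (n + 1)) ℂ)).mulVecLin) ↔
        a.rank ≤ 1) := by
  obtain ⟨m, rfl⟩ : ∃ m, n = m + 1 := ⟨n - 1, by omega⟩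
  have z2 : (⟨0, by omega⟩ : Fin (m + 1 + 1)) = 0 := rfl
  have o2 : (⟨1, by omega⟩ : Fin (m + 1 + 1)) = 1 := rfl
  have z1 : (⟨0, by omega⟩ : Fin (m + 1)) = 0 := rfl
  rw [z2] at h00 h01 h0j
  rw [o2] at h01 h10 h11 h1j
  rw [z2] at h10 hi0
  rw [o2] at hi1
  rw [z1] at h10 h1j hi0
  set B : Matrix (Fin (m + 1 + 1)) (Fin (m + 1 + 1)) ℂ :=
    A - d • (1 : Matrix (Fin (m + 1 + 1)) (Fin (m + 1 + 1)) ℂ) with hBdef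
  have hB : ∀ i j, B i j = A i j - if i = j then d else 0 := by
    intro i j
    simp [hBdef, Matrix.sub_apply, Matrix.one_apply, mul_ite]
  have vs2 : ∀ j : Fin m, ((j.succ.succ : Fin (m + 1 + 1)) : ℕ) = (j : ℕ) + 2 := by
    intro j; simp [Fin.val_succ]
  have vs1 : ∀ j : Fin m, ((j.succ : Fin (m + 1)) : ℕ) = (j : ℕ) + 1 := by
    intro j; simp [Fin.val_succ]
  -- entries of B
  have hB00 : B 0 0 = α := by rw [hB, h00]; simp
  have hB01 : B 0 1 = 1 := by
    rw [hB, h01, if_neg (by simp only [Fin.ext_iff, Fin.val_zero, Fin.val_one]; omega), sub_zero]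
  have hB0s : ∀ j : Fin m, B 0 j.succ.succ = 0 := by
    intro j
    rw [hB, h0j j.succ.succ (by rw [vs2]; omega),
      if_neg (by simp only [Fin.ext_iff, Fin.val_zero, vs2]; omega), sub_zero]
  have hB10 : B 1 0 = a 0 0 + α ^ 2 := by
    rw [hB, h10, if_neg (by simp only [Fin.ext_iff, Fin.val_zero, Fin.val_one]; omega), sub_zero]
  have hB11 : B 1 1 = α := by rw [hB, h11]; simp
  have hB1s : ∀ j : Fin m, B 1 j.succ.succ = a 0 j.succ := by
    intro j
    rw [hB, h1j j.succ (by rw [vs1]; omega),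
      if_neg (by simp only [Fin.ext_iff, Fin.val_one, vs2]; omega), sub_zero]
  have hBs0 : ∀ i : Fin m, B i.succ.succ 0 = a i.succ 0 := by
    intro i
    rw [hB, hi0 i.succ (by rw [vs1]; omega),
      if_neg (by simp only [Fin.ext_iff, Fin.val_zero, vs2]; omega), sub_zero]
  have hBs1 : ∀ i : Fin m, B i.succ.succ 1 = 0 := by
    intro i
    rw [hB, hi1 i.succ (by rw [vs1]; omega),
      if_neg (by simp only [Fin.ext_iff, Fin.val_one, vs2]; omega), sub_zero]
  have hBss : ∀ i j : Fin m, B i.succ.succ j.succ.succ = a i.succ j.succ := by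
    intro i j
    rw [hB, hij i.succ j.succ (by rw [vs1]; omega) (by rw [vs1]; omega)]
    rcases eq_or_ne i j with rfl | h
    · simp
    · rw [if_neg (by simp [Fin.succ_inj, h]), if_neg (by simp [Fin.succ_inj, h]), add_zero,
        sub_zero]

  -- expansion of matrix-vector products
  have h1s : (1 : Fin (m + 1 + 1)) = (0 : Fin (m + 1)).succ := rfl
  have hmulB : ∀ (x : Fin (m + 1 + 1) → ℂ) (i : Fin (m + 1 + 1)),
      (B *ᵥ x) i = B i 0 * x 0 + (B i 1 * x 1 +
        ∑ j : Fin m, B i j.succ.succ * x j.succ.succ) := by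
    intro x i
    rw [Matrix.mulVec, dotProduct, Fin.sum_univ_succ, Fin.sum_univ_succ, ← h1s]
  have hmula : ∀ (y : Fin (m + 1) → ℂ) (i : Fin (m + 1)),
      (a *ᵥ y) i = a i 0 * y 0 + ∑ j : Fin m, a i j.succ * y j.succ := by
    intro y i
    rw [Matrix.mulVec, dotProduct, Fin.sum_univ_succ]
  have memB : ∀ x, x ∈ LinearMap.ker B.mulVecLin ↔ ∀ i, (B *ᵥ x) i = 0 := by
    intro x
    rw [LinearMap.mem_ker, Matrix.mulVecLin_apply, funext_iff]
    exact Iff.rfl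
  have mema : ∀ y, y ∈ LinearMap.ker a.mulVecLin ↔ ∀ i, (a *ᵥ y) i = 0 := by
    intro y
    rw [LinearMap.mem_ker, Matrix.mulVecLin_apply, funext_iff]
    exact Iff.rfl
  obtain ⟨F1, hF0, hFs, hFadd, hFsmul⟩ :
      ∃ F1 : (Fin (m + 1 + 1) → ℂ) → (Fin (m + 1) → ℂ),
        (∀ x, F1 x 0 = x 0) ∧ (∀ x (j : Fin m), F1 x j.succ = x j.succ.succ) ∧
        (∀ x x', F1 (x + x') = F1 x + F1 x') ∧ (∀ (c : ℂ) x, F1 (c • x) = c • F1 x) := by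
    refine ⟨fun x => Fin.cons (x 0) (fun j : Fin m => x j.succ.succ), fun x => ?_,
      fun x j => ?_, fun x x' => ?_, fun c x => ?_⟩
    · simp
    · simp
    · funext i
      induction i using Fin.cases with
      | zero => simp
      | succ j => simp
    · funext i
      induction i using Fin.cases with
      | zero => simp
      | succ j => simp
  obtain ⟨G1, hG0, hG1, hGs⟩ :
      ∃ G1 : (Fin (m + 1) → ℂ) → (Fin (m + 1 + 1) → ℂ),
        (∀ y, G1 y 0 = y 0) ∧ (∀ y, G1 y 1 = -α * y 0) ∧
        (∀ y (j : Fin m), G1 y j.succ.succ = y j.succ) := by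
    refine ⟨fun y => Fin.cons (y 0) (Fin.cons (-α * y 0) (fun j : Fin m => y j.succ)),
      fun y => ?_, fun y => ?_, fun y j => ?_⟩
    · simp
    · rw [h1s]; simp
    · simp

  -- row computations
  have K1 : ∀ x, (B *ᵥ x) 0 = α * x 0 + x 1 := by
    intro x
    rw [hmulB, hB00, hB01]
    simp [hB0s]
  have hK0 : ∀ x, x 1 = -α * x 0 → (a *ᵥ F1 x) 0 = (B *ᵥ x) 1 := by
    intro x hx1
    rw [hmula, hmulB, hF0, hB10, hB11]
    simp only [hFs, hB1s]
    rw [hx1]; ring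
  have hKs : ∀ x (i : Fin m), (a *ᵥ F1 x) i.succ = (B *ᵥ x) i.succ.succ := by
    intro x i
    rw [hmula, hmulB, hF0, hBs0 i, hBs1 i]
    simp only [hFs, hBss]
    ring
  have hFG : ∀ y, F1 (G1 y) = y := by
    intro y
    funext j
    induction j using Fin.cases with
    | zero => rw [hF0, hG0]
    | succ k => rw [hFs, hGs]
  have fwd : ∀ x, x ∈ LinearMap.ker B.mulVecLin → F1 x ∈ LinearMap.ker a.mulVecLin := by
    intro x hx
    have hx' := (memB x).1 hx
    have hx1 : x 1 = -α * x 0 := by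
      have h0 := hx' 0
      rw [K1] at h0
      linear_combination h0
    rw [mema]
    intro i
    induction i using Fin.cases with
    | zero => rw [hK0 x hx1]; exact hx' 1
    | succ j => rw [hKs x j]; exact hx' _
  have bwd : ∀ y, y ∈ LinearMap.ker a.mulVecLin → G1 y ∈ LinearMap.ker B.mulVecLin := by
    intro y hy
    have hy' := (mema y).1 hy
    have hg1 : G1 y 1 = -α * G1 y 0 := by rw [hG1, hG0]
    rw [memB]
    intro i
    induction i using Fin.cases with
    | zero => rw [K1, hG0, hG1]; ring
    | succ k =>
      induction k using Fin.cases with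
      | zero =>
        rw [← h1s, ← hK0 (G1 y) hg1, hFG]
        exact hy' 0
      | succ j =>
        rw [← hKs (G1 y) j, hFG]
        exact hy' _
  have e : (LinearMap.ker B.mulVecLin) ≃ₗ[ℂ] (LinearMap.ker a.mulVecLin) :=
    { toFun := fun x => ⟨F1 x.1, fwd x.1 x.2⟩
      map_add' := by
        intro x y
        apply Subtype.ext
        exact hFadd x.1 y.1
      map_smul' := by
        intro c x
        apply Subtype.ext
        exact hFsmul c x.1
      invFun := fun y => ⟨G1 y.1, bwd y.1 y.2⟩
      left_inv := by
        rintro ⟨x, hx⟩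
        have hx' := (memB x).1 hx
        have hx1 : x 1 = -α * x 0 := by
          have h0 := hx' 0
          rw [K1] at h0
          linear_combination h0
        apply Subtype.ext
        show G1 (F1 x) = x
        funext i
        induction i using Fin.cases with
        | zero => rw [hG0, hF0]
        | succ k =>
          induction k using Fin.cases with
          | zero =>
            rw [← h1s, hG1, hF0, hx1]
          | succ j => rw [hGs, hFs]
      right_inv := by
        rintro ⟨y, hy⟩
        exact Subtype.ext (hFG y) }
  have hk : Module.finrank ℂ (LinearMap.ker B.mulVecLin)
      = Module.finrank ℂ (LinearMap.ker a.mulVecLin) := e.finrank_eq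
  have r1 : B.rank + Module.finrank ℂ (LinearMap.ker B.mulVecLin) = m + 1 + 1 := by
    have h := LinearMap.finrank_range_add_finrank_ker B.mulVecLin
    rwa [Module.finrank_fin_fun] at h
  have r2 : a.rank + Module.finrank ℂ (LinearMap.ker a.mulVecLin) = m + 1 := by
    have h := LinearMap.finrank_range_add_finrank_ker a.mulVecLin
    rwa [Module.finrank_fin_fun] at h
  constructor
  · omega
  · omega
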